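/- arXiv:1710.09430 — 2 statements merged into one kernel-verified Lean document; each statement's English description precedes it below -/
import Mathlib

section
/- Let H be symmetric positive definite with 0 ⪯ I − γH ≺ I, let ρ ∈ [0, 1) and k ≥ 0. Suppose a symmetric PSD matrix C satisfies C ⪯ γ L(S(C)) + k·L(H), where L(M) := γ Σ_{t=0}^∞ (I−γH)^t M (I−γH)^t and S is a monotone linear operator on symmetric matrices (0 ⪯ M ⪯ M' implies 0 ⪯ S(M) ⪯ S(M')) with γ L(S(I)) ⪯ ρ I and L(H) ⪯ I. Then C ⪯ (k / (1 − ρ)) I. -/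
/-!
Write `A = I - γH`, so `0 ⪯ A ≺ I`: diagonalising `A` shows that `∑ₜ AᵗMAᵗ` converges, which
makes `L` linear and Loewner-monotone. Then `Φ(M) = γ L(S(M))` satisfies `Φ(M) ⪯ c Φ(I) ⪯ cρ I`
whenever `0 ⪯ M ⪯ cI`, and `L(H) ⪯ I` gives `C ⪯ Φ(C) + kI`. So a bound `C ⪯ cI` improves to
`C ⪯ (ρc + k)I`; iterated from any initial bound, these converge to the fixed point
`k / (1 - ρ)`, and the Loewner order is closed.
-/

open Matrix Filter Topology
open scoped MatrixOrder

section Iteration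

variable {E : Type*} [AddCommGroup E] [PartialOrder E] [IsOrderedAddMonoid E] [Module ℝ E]
  [PosSMulMono ℝ E] [TopologicalSpace E] [OrderClosedTopology E] [ContinuousSMul ℝ E]

theorem le_smul_of_le_map_add_smul (Φ : E → E) {e C : E} {ρ k c₀ : ℝ}
    (hρ0 : 0 ≤ ρ) (hρ1 : ρ < 1) (hk : 0 ≤ k) (hc₀ : 0 ≤ c₀)
    (hΦ : ∀ (M : E) (c : ℝ), 0 ≤ M → M ≤ c • e → Φ M ≤ c • Φ e) (hΦe : Φ e ≤ ρ • e)
    (hC0 : 0 ≤ C) (hC : C ≤ Φ C + k • e) (hCc₀ : C ≤ c₀ • e) :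
    C ≤ (k / (1 - ρ)) • e := by
  set c : ℕ → ℝ := fun m => k / (1 - ρ) + ρ ^ m * (c₀ - k / (1 - ρ))
  have hc_succ (m : ℕ) : c (m + 1) = ρ * c m + k := by
    simp only [c]
    field_simp [(sub_pos.mpr hρ1).ne']
    ring
  have hc_nonneg (m : ℕ) : 0 ≤ c m := by
    induction m with
    | zero => simpa [c] using hc₀
    | succ m ih => rw [hc_succ]; exact add_nonneg (mul_nonneg hρ0 ih) hk
  have hC_le (m : ℕ) : C ≤ c m • e := by
    induction m with
    | zero => simpa [c] using hCc₀
    | succ m ih =>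
      calc C ≤ Φ C + k • e := hC
        _ ≤ c m • Φ e + k • e := add_le_add_left (hΦ C _ hC0 ih) _
        _ ≤ c m • (ρ • e) + k • e :=
          add_le_add_left (smul_le_smul_of_nonneg_left hΦe (hc_nonneg m)) _
        _ = c (m + 1) • e := by rw [hc_succ, smul_smul, add_smul, mul_comm]
  have hc_lim : Tendsto c atTop (𝓝 (k / (1 - ρ))) := by
    simpa using tendsto_const_nhds.add
      ((tendsto_pow_atTop_nhds_zero_of_lt_one hρ0 hρ1).mul_const (c₀ - k / (1 - ρ)))
  exact ge_of_tendsto' (hc_lim.smul_const e) hC_le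

end Iteration

namespace Matrix

variable {n : Type*} [Fintype n]

theorem isClosed_setOf_posSemidef : IsClosed {M : Matrix n n ℝ | M.PosSemidef} := by
  simp only [posSemidef_iff_dotProduct_mulVec, Set.ofPred_and, Set.ofPred_forall]
  exact (isClosed_eq (by fun_prop) (by fun_prop)).inter
    (isClosed_iInter fun x => isClosed_le (by fun_prop) (by fun_prop))

instance : OrderClosedTopology (Matrix n n ℝ) :=
  ⟨isClosed_le_of_isClosed_nonneg <| by simpa only [nonneg_iff_posSemidef] using
    isClosed_setOf_posSemidef⟩

variable [DecidableEq n]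

theorem IsHermitian.exists_nonneg_le_smul_one {A : Matrix n n ℝ} (hA : A.IsHermitian) :
    ∃ c : ℝ, 0 ≤ c ∧ A ≤ c • 1 := by
  obtain ⟨r, hr⟩ := (Set.finite_range hA.eigenvalues).bddAbove
  refine ⟨max r 0, le_max_right r 0, ?_⟩
  rw [← Algebra.algebraMap_eq_smul_one]
  refine le_algebraMap_of_spectrum_le (fun x hx => (hr ?_).trans (le_max_left r 0))
    hA.isSelfAdjoint
  rwa [← hA.spectrum_real_eq_range_eigenvalues]

theorem PosSemidef.abs_eigenvalues_lt_one {A : Matrix n n ℝ} (hA : A.PosSemidef)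
    (h : (1 - A).PosDef) (i : n) : |hA.isHermitian.eigenvalues i| < 1 := by
  have hmem : 1 - hA.isHermitian.eigenvalues i ∈ spectrum ℝ (1 - A) := by
    rw [← map_one (algebraMap ℝ (Matrix n n ℝ)), ← spectrum.singleton_sub_eq]
    exact Set.sub_mem_sub rfl (hA.isHermitian.eigenvalues_mem_spectrum_real i)
  rw [h.isHermitian.spectrum_real_eq_range_eigenvalues] at hmem
  obtain ⟨j, hj⟩ := hmem
  have := h.eigenvalues_pos j
  rw [abs_of_nonneg (hA.eigenvalues_nonneg i)]
  linarith

theorem summable_diagonal_pow_mul_mul_diagonal_pow {d : n → ℝ} (hd : ∀ i, |d i| < 1)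
    (N : Matrix n n ℝ) : Summable fun t : ℕ => diagonal d ^ t * N * diagonal d ^ t := by
  refine Pi.summable.mpr fun i => Pi.summable.mpr fun j => ?_
  have hij : |d i * d j| < 1 := by
    rw [abs_mul]
    exact mul_lt_one_of_nonneg_of_lt_one_left (abs_nonneg _) (hd i) (hd j).le
  refine ((summable_geometric_of_abs_lt_one hij).mul_left (N i j)).congr fun t => ?_
  simp only [diagonal_pow, diagonal_mul, mul_diagonal, Pi.pow_apply]
  ring

variable {A : Matrix n n ℝ} (hA : A.IsHermitian)

theorem IsHermitian.summable_pow_mul_mul_pow (h : ∀ i, |hA.eigenvalues i| < 1)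
    (M : Matrix n n ℝ) : Summable fun t : ℕ => A ^ t * M * A ^ t := by
  set U : Matrix n n ℝ := (hA.eigenvectorUnitary : Matrix n n ℝ)
  have hpow (t : ℕ) : A ^ t = U * diagonal hA.eigenvalues ^ t * star U := by
    conv_lhs => rw [hA.spectral_theorem]
    rw [← map_pow, Unitary.conjStarAlgAut_apply]
    rfl
  refine (((summable_diagonal_pow_mul_mul_diagonal_pow h (star U * M * U)).mul_left U).mul_right
    (star U)).congr fun t => ?_
  simp only [hpow, Matrix.mul_assoc]

theorem IsHermitian.tsum_pow_mul_mul_pow_mono (h : ∀ i, |hA.eigenvalues i| < 1)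
    {M M' : Matrix n n ℝ} (hMM' : M ≤ M') :
    ∑' t : ℕ, A ^ t * M * A ^ t ≤ ∑' t : ℕ, A ^ t * M' * A ^ t := by
  refine (hA.summable_pow_mul_mul_pow h M).tsum_le_tsum (fun t => ?_)
    (hA.summable_pow_mul_mul_pow h M')
  simpa only [(hA.pow t).star_eq] using star_left_conjugate_le_conjugate hMM' (A ^ t)

end Matrix

/-- Iterating the recursive Loewner domination `C ⪯ γ L(S(C)) + k L(H)`
(with `γ L(S(I)) ⪯ ρ I`, `L(H) ⪯ I`, `S` monotone linear, `ρ ∈ [0,1)`,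
`k ≥ 0`) yields `C ⪯ (k/(1−ρ)) I`, where
`L(M) = γ Σ_t (I−γH)^t M (I−γH)^t`. -/
theorem crude_stationary_covariance_bound
    {d : ℕ} (H : Matrix (Fin d) (Fin d) ℝ) (hH : H.PosDef)
    (γ : ℝ) (hγ : 0 < γ)
    (hle : ((1 : Matrix (Fin d) (Fin d) ℝ) - γ • H).PosSemidef)
    (L : Matrix (Fin d) (Fin d) ℝ → Matrix (Fin d) (Fin d) ℝ)
    (hL : ∀ M, L M = γ • ∑' t : ℕ,
        ((1 : Matrix (Fin d) (Fin d) ℝ) - γ • H) ^ t * M *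
        ((1 : Matrix (Fin d) (Fin d) ℝ) - γ • H) ^ t)
    (S : Matrix (Fin d) (Fin d) ℝ →ₗ[ℝ] Matrix (Fin d) (Fin d) ℝ)
    (hSmono : ∀ M M' : Matrix (Fin d) (Fin d) ℝ, M.PosSemidef →
      (M' - M).PosSemidef → (S M).PosSemidef ∧ (S M' - S M).PosSemidef)
    (ρ k : ℝ) (hρ0 : 0 ≤ ρ) (hρ1 : ρ < 1) (hk : 0 ≤ k)
    (hρ : (ρ • (1 : Matrix (Fin d) (Fin d) ℝ) - γ • L (S 1)).PosSemidef)
    (hLH : ((1 : Matrix (Fin d) (Fin d) ℝ) - L H).PosSemidef)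
    (C : Matrix (Fin d) (Fin d) ℝ) (hC : C.PosSemidef)
    (hrec : ((γ • L (S C) + k • L H) - C).PosSemidef) :
    ((k / (1 - ρ)) • (1 : Matrix (Fin d) (Fin d) ℝ) - C).PosSemidef := by
  set A := (1 : Matrix (Fin d) (Fin d) ℝ) - γ • H
  have hA : A.IsHermitian := hle.isHermitian
  have heig := hle.abs_eigenvalues_lt_one (by simpa [A] using hH.smul hγ)
  have hL_mono {M M' : Matrix (Fin d) (Fin d) ℝ} (hMM' : M ≤ M') : L M ≤ L M' := by
    rw [hL, hL]
    exact smul_le_smul_of_nonneg_left (hA.tsum_pow_mul_mul_pow_mono heig hMM') hγ.le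
  have hL_smul (c : ℝ) (M : Matrix (Fin d) (Fin d) ℝ) : L (c • M) = c • L M := by
    simp only [hL, mul_smul_comm, smul_mul_assoc, tsum_const_smul'', smul_comm c γ]
  obtain ⟨c₀, hc₀, hCc₀⟩ := hC.isHermitian.exists_nonneg_le_smul_one
  refine le_smul_of_le_map_add_smul (fun M => γ • L (S M)) hρ0 hρ1 hk hc₀ ?_ hρ hC.nonneg ?_ hCc₀
  · intro M c hM hMc
    calc γ • L (S M) ≤ γ • L (S (c • 1)) :=
          smul_le_smul_of_nonneg_left (hL_mono (hSmono M (c • 1) hM.posSemidef hMc).2) hγ.le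
      _ = c • γ • L (S 1) := by rw [map_smul, hL_smul, smul_comm]
  · calc C ≤ γ • L (S C) + k • L H := hrec
      _ ≤ γ • L (S C) + k • 1 := add_le_add_right (smul_le_smul_of_nonneg_left hLH hk) _
end

section
/- Let H be symmetric positive definite and x a random vector with E[xxᵀ] = H satisfying E[‖x‖² xxᵀ] ⪯ R²H, and let Σ be symmetric PSD. If 0 < γ < 1/R² and C is a symmetric PSD matrix satisfying HC + CH = γ E[(xᵀCx)xxᵀ] + γΣ and C ⪯ (γ‖Σ‖_H / (1−γR²)) I, then Tr(C) ≤ (γ/2) Tr(H^{-1}Σ) + (1/2)(γ²R²/(1−γR²)) d ‖Σ‖_H, where ‖Σ‖_H := ‖H^{-1/2}ΣH^{-1/2}‖. -/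
/-!
Multiplying the fixed-point equation by `H⁻¹` and taking traces gives
`2 Tr C = γ Tr(H⁻¹ S_C) + γ Tr(H⁻¹ Σ)` with `S_C = E[(xᵀCx) xxᵀ]`. The crude bound gives
`xᵀCx ≤ c ‖x‖²` pointwise, `c = γ‖Σ‖_H/(1−γR²)`, hence `S_C ⪯ c E[‖x‖² xxᵀ] ⪯ c R² H`, and so
`Tr(H⁻¹ S_C) ≤ c R² d`.
-/

open MeasureTheory Matrix
open scoped Matrix.Norms.L2Operator MatrixOrder

namespace Matrix

variable {n : Type*} [Fintype n] [DecidableEq n]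

section RCLike

open scoped ComplexOrder

variable {𝕜 : Type*} [RCLike 𝕜]

theorem PosSemidef.trace_mul_nonneg {P A : Matrix n n 𝕜} (hP : P.PosSemidef)
    (hA : A.PosSemidef) : 0 ≤ (P * A).trace := by
  obtain ⟨X, rfl⟩ := CStarAlgebra.nonneg_iff_eq_star_mul_self.mp hP.nonneg
  rw [Matrix.mul_assoc, trace_mul_comm]
  exact (hA.mul_mul_conjTranspose_same X).trace_nonneg

theorem PosSemidef.trace_mul_le_trace_mul {P A B : Matrix n n 𝕜} (hP : P.PosSemidef)
    (hAB : A ≤ B) : (P * A).trace ≤ (P * B).trace := by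
  simpa [Matrix.mul_sub] using hP.trace_mul_nonneg hAB

end RCLike

theorem trace_inv_mul_mul_add_mul {R : Type*} [CommRing R] {H : Matrix n n R}
    (hH : IsUnit H.det) (C : Matrix n n R) : (H⁻¹ * (H * C + C * H)).trace = 2 * C.trace := by
  rw [Matrix.mul_add, trace_add, ← Matrix.mul_assoc, nonsing_inv_mul H hH, Matrix.one_mul,
    trace_mul_comm H⁻¹, Matrix.mul_assoc, mul_nonsing_inv H hH, Matrix.mul_one, two_mul]

theorem dotProduct_mulVec_le_of_le_smul_one {C : Matrix n n ℝ} {c : ℝ} (hC : C ≤ c • 1)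
    (y : n → ℝ) : y ⬝ᵥ C *ᵥ y ≤ c * ∑ k, y k ^ 2 := by
  have hy : y ⬝ᵥ y = ∑ k, y k ^ 2 := by simp only [dotProduct, sq]
  have := hC.dotProduct_mulVec_nonneg y
  simp only [star_trivial, sub_mulVec, smul_mulVec, one_mulVec, dotProduct_sub,
    dotProduct_smul, smul_eq_mul, hy] at this
  linarith

end Matrix

section Vectors

variable {ι : Type*} [Fintype ι]

theorem mul_dotProduct_sq_eq_sum (φ : ℝ) (v y : ι → ℝ) :
    φ * (v ⬝ᵥ y) ^ 2 = ∑ i, ∑ j, v i * v j * (φ * (y i * y j)) := by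
  rw [sq, dotProduct, Finset.sum_mul_sum, Finset.mul_sum]
  exact Finset.sum_congr rfl fun i _ => by
    rw [Finset.mul_sum]
    exact Finset.sum_congr rfl fun j _ => by ring

theorem sq_le_sum_sq (y : ι → ℝ) (k : ι) : y k ^ 2 ≤ ∑ m, y m ^ 2 :=
  Finset.single_le_sum (fun m _ => sq_nonneg (y m)) (Finset.mem_univ k)

theorem abs_mul_le_sum_sq (y : ι → ℝ) (k l : ι) : |y k * y l| ≤ ∑ m, y m ^ 2 := by
  have := two_mul_le_add_sq |y k| |y l|
  rw [sq_abs, sq_abs] at this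
  rw [abs_mul]
  linarith [sq_le_sum_sq y k, sq_le_sum_sq y l]

theorem mul_mul_mul_eq_div_sum_sq_mul_sum_sq (y : ι → ℝ) (k l i j : ι) :
    y k * y l * (y i * y j) = (∑ m, y m ^ 2) * (y k * y l) * ((∑ m, y m ^ 2) * (y i * y j)) /
      ((∑ m, y m ^ 2) * ∑ m, y m ^ 2) := by
  rcases eq_or_ne (∑ m, y m ^ 2) 0 with h0 | h0
  · have hy : y = 0 := by
      ext m
      exact pow_eq_zero_iff two_ne_zero |>.mp (le_antisymm (h0 ▸ sq_le_sum_sq y m) (sq_nonneg _))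
    simp [hy]
  · field_simp

end Vectors

section SecondMoment

variable {Ω ι : Type*} [MeasurableSpace Ω]

noncomputable def weightedSecondMoment (μ : Measure Ω) (x : Ω → ι → ℝ) (φ : Ω → ℝ) :
    Matrix ι ι ℝ :=
  of fun i j => ∫ ω, φ ω * (x ω i * x ω j) ∂μ

variable {μ : Measure Ω} {x : Ω → ι → ℝ}

theorem isHermitian_weightedSecondMoment (φ : Ω → ℝ) :
    (weightedSecondMoment μ x φ).IsHermitian := by
  ext i j
  simp only [conjTranspose_apply, star_trivial, weightedSecondMoment, of_apply, mul_comm (x _ i)]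

theorem weightedSecondMoment_const_mul (c : ℝ) (φ : Ω → ℝ) :
    weightedSecondMoment μ x (fun ω => c * φ ω) = c • weightedSecondMoment μ x φ := by
  ext i j
  simp only [weightedSecondMoment, of_apply, Matrix.smul_apply, smul_eq_mul, mul_assoc,
    integral_const_mul]

variable [Fintype ι]

theorem integrable_mul_dotProduct_sq {φ : Ω → ℝ}
    (hφ : ∀ i j, Integrable (fun ω => φ ω * (x ω i * x ω j)) μ) (v : ι → ℝ) :
    Integrable (fun ω => φ ω * (v ⬝ᵥ x ω) ^ 2) μ := by
  simp only [mul_dotProduct_sq_eq_sum]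
  exact integrable_finsetSum _ fun i _ =>
    integrable_finsetSum _ fun j _ => (hφ i j).const_mul _

theorem dotProduct_weightedSecondMoment_mulVec {φ : Ω → ℝ}
    (hφ : ∀ i j, Integrable (fun ω => φ ω * (x ω i * x ω j)) μ) (v : ι → ℝ) :
    v ⬝ᵥ weightedSecondMoment μ x φ *ᵥ v = ∫ ω, φ ω * (v ⬝ᵥ x ω) ^ 2 ∂μ := by
  simp only [mul_dotProduct_sq_eq_sum]
  rw [integral_finsetSum _ fun i _ => integrable_finsetSum _ fun j _ => (hφ i j).const_mul _]
  simp only [dotProduct, mulVec, Finset.mul_sum]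
  refine Finset.sum_congr rfl fun i _ => ?_
  rw [integral_finsetSum _ fun j _ => (hφ i j).const_mul _]
  refine Finset.sum_congr rfl fun j _ => ?_
  rw [integral_const_mul, weightedSecondMoment, of_apply]
  ring

theorem weightedSecondMoment_mono {φ ψ : Ω → ℝ}
    (hφ : ∀ i j, Integrable (fun ω => φ ω * (x ω i * x ω j)) μ)
    (hψ : ∀ i j, Integrable (fun ω => ψ ω * (x ω i * x ω j)) μ) (hle : ∀ ω, φ ω ≤ ψ ω) :
    weightedSecondMoment μ x φ ≤ weightedSecondMoment μ x ψ := by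
  refine .of_dotProduct_mulVec_nonneg
    ((isHermitian_weightedSecondMoment ψ).sub (isHermitian_weightedSecondMoment φ)) fun v => ?_
  rw [star_trivial, sub_mulVec, dotProduct_sub, sub_nonneg,
    dotProduct_weightedSecondMoment_mulVec hφ, dotProduct_weightedSecondMoment_mulVec hψ]
  exact integral_mono (integrable_mul_dotProduct_sq hφ v) (integrable_mul_dotProduct_sq hψ v)
    fun ω => mul_le_mul_of_nonneg_right (hle ω) (sq_nonneg _)

/- No measurability of `x` itself is assumed: the quartic monomial is recovered as a quotient
of the integrable functions `‖x‖² xₖxₗ`, `‖x‖² xᵢxⱼ` and `‖x‖⁴ = ∑ₘ ‖x‖² xₘxₘ`. -/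
theorem integrable_mul_mul_mul
    (hx : ∀ i j, Integrable (fun ω => (∑ m, x ω m ^ 2) * (x ω i * x ω j)) μ) (k l i j : ι) :
    Integrable (fun ω => x ω k * x ω l * (x ω i * x ω j)) μ := by
  have hfourth : Integrable (fun ω => (∑ m, x ω m ^ 2) * ∑ m, x ω m ^ 2) μ := by
    simpa only [← Finset.mul_sum, sq] using integrable_finsetSum _ fun m _ => hx m m
  have hmeas : AEStronglyMeasurable (fun ω => x ω k * x ω l * (x ω i * x ω j)) μ := by
    simp only [mul_mul_mul_eq_div_sum_sq_mul_sum_sq (x _) k l i j]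
    exact (((hx k l).aemeasurable.mul (hx i j).aemeasurable).div
      hfourth.aemeasurable).aestronglyMeasurable
  refine hfourth.mono' hmeas (.of_forall fun ω => ?_)
  rw [Real.norm_eq_abs, abs_mul]
  exact mul_le_mul (abs_mul_le_sum_sq _ k l) (abs_mul_le_sum_sq _ i j) (abs_nonneg _)
    (Finset.sum_nonneg fun m _ => sq_nonneg _)

theorem integrable_dotProduct_mulVec_mul
    (hx : ∀ i j, Integrable (fun ω => (∑ m, x ω m ^ 2) * (x ω i * x ω j)) μ)
    (C : Matrix ι ι ℝ) (i j : ι) :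
    Integrable (fun ω => (x ω ⬝ᵥ C *ᵥ x ω) * (x ω i * x ω j)) μ := by
  have hexpand : (fun ω => (x ω ⬝ᵥ C *ᵥ x ω) * (x ω i * x ω j))
      = fun ω => ∑ k, ∑ l, C k l * (x ω k * x ω l * (x ω i * x ω j)) := by
    funext ω
    simp only [dotProduct, mulVec, Finset.sum_mul, Finset.mul_sum]
    exact Finset.sum_congr rfl fun k _ => Finset.sum_congr rfl fun l _ => by ring
  rw [hexpand]
  exact integrable_finsetSum _ fun k _ => integrable_finsetSum _ fun l _ =>
    (integrable_mul_mul_mul hx k l i j).const_mul _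

end SecondMoment

theorem refined_stationary_covariance_trace_bound_general
    {d : ℕ} {Ω : Type*} [MeasurableSpace Ω] (μ : Measure Ω)
    (x : Ω → (Fin d → ℝ))
    (H M4 : Matrix (Fin d) (Fin d) ℝ) (hH : H.PosDef)
    (hM4def : ∀ i j, M4 i j = ∫ ω, (∑ k, x ω k ^ 2) * (x ω i * x ω j) ∂μ)
    (hM4int : ∀ i j, Integrable (fun ω => (∑ k, x ω k ^ 2) * (x ω i * x ω j)) μ)
    (R2 : ℝ) (hR : (R2 • H - M4).PosSemidef)
    (Sg : Matrix (Fin d) (Fin d) ℝ)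
    (γ : ℝ) (hγ0 : 0 < γ) (hγ : γ < 1 / R2)
    (C SC : Matrix (Fin d) (Fin d) ℝ)
    (hSC : ∀ i j, SC i j = ∫ ω, (x ω ⬝ᵥ C.mulVec (x ω)) * (x ω i * x ω j) ∂μ)
    (heq : H * C + C * H = γ • SC + γ • Sg)
    (hcrude : (((γ * ‖(CFC.sqrt H)⁻¹ * Sg * (CFC.sqrt H)⁻¹‖ /
        (1 - γ * R2)) • (1 : Matrix (Fin d) (Fin d) ℝ)) - C).PosSemidef) :
    C.trace ≤ (γ / 2) * (H⁻¹ * Sg).trace +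
      (1 / 2) * (γ ^ 2 * R2 / (1 - γ * R2)) * d *
        ‖(CFC.sqrt H)⁻¹ * Sg * (CFC.sqrt H)⁻¹‖ := by
  set c := γ * ‖(CFC.sqrt H)⁻¹ * Sg * (CFC.sqrt H)⁻¹‖ / (1 - γ * R2) with hc_def
  have hR2 : 0 < R2 := one_div_pos.mp (hγ0.trans hγ)
  have hγR2 : 0 < 1 - γ * R2 := by rw [lt_div_iff₀ hR2] at hγ; linarith
  have hc : 0 ≤ c := by positivity
  have hdet : IsUnit H.det := hH.isUnit.map detMonoidHom
  have htrace : 2 * C.trace = γ * (H⁻¹ * SC).trace + γ * (H⁻¹ * Sg).trace := by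
    rw [← trace_inv_mul_mul_add_mul hdet, heq, Matrix.mul_add, trace_add, Matrix.mul_smul,
      Matrix.mul_smul, trace_smul, trace_smul, smul_eq_mul, smul_eq_mul]
  have hM4 : M4 = weightedSecondMoment μ x fun ω => ∑ k, x ω k ^ 2 := ext hM4def
  have hSC_le : SC ≤ (c * R2) • H := calc
    SC = weightedSecondMoment μ x fun ω => x ω ⬝ᵥ C *ᵥ x ω := ext hSC
    _ ≤ weightedSecondMoment μ x fun ω => c * ∑ k, x ω k ^ 2 :=
      weightedSecondMoment_mono (integrable_dotProduct_mulVec_mul hM4int C)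
        (fun i j => by simpa only [mul_assoc] using (hM4int i j).const_mul c)
        (fun ω => dotProduct_mulVec_le_of_le_smul_one hcrude (x ω))
    _ = c • M4 := by rw [weightedSecondMoment_const_mul, hM4]
    _ ≤ c • (R2 • H) := smul_le_smul_of_nonneg_left hR hc
    _ = (c * R2) • H := smul_smul c R2 H
  have hSC_trace : (H⁻¹ * SC).trace ≤ c * R2 * d := by
    simpa [nonsing_inv_mul H hdet] using hH.inv.posSemidef.trace_mul_le_trace_mul hSC_le
  calc C.trace = (γ / 2) * (H⁻¹ * Sg).trace + (γ / 2) * (H⁻¹ * SC).trace := by linarith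
    _ ≤ (γ / 2) * (H⁻¹ * Sg).trace + (γ / 2) * (c * R2 * d) := by gcongr
    _ = _ := by rw [hc_def]; ring

/-- Refined bound on the stationary covariance: with `H = E[xxᵀ]` positive
definite, `E[‖x‖² xxᵀ] ⪯ R²H`, `Σ` PSD, `0 < γ < 1/R²`, if the symmetric PSD
matrix `C` satisfies `HC + CH = γE[(xᵀCx)xxᵀ] + γΣ` together with the crude
bound `C ⪯ (γ‖Σ‖_H/(1−γR²)) I`, then
`Tr(C) ≤ (γ/2)Tr(H⁻¹Σ) + (1/2)(γ²R²/(1−γR²)) d ‖Σ‖_H`,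
where `‖Σ‖_H = ‖H^{-1/2}ΣH^{-1/2}‖` (spectral norm). -/
theorem refined_stationary_covariance_trace_bound
    {d : ℕ} {Ω : Type*} [MeasurableSpace Ω] (μ : Measure Ω)
    [IsProbabilityMeasure μ] (x : Ω → (Fin d → ℝ))
    (H M4 : Matrix (Fin d) (Fin d) ℝ) (hH : H.PosDef)
    (hHdef : ∀ i j, H i j = ∫ ω, x ω i * x ω j ∂μ)
    (hM4def : ∀ i j, M4 i j = ∫ ω, (∑ k, x ω k ^ 2) * (x ω i * x ω j) ∂μ)
    (hM4int : ∀ i j, Integrable (fun ω => (∑ k, x ω k ^ 2) * (x ω i * x ω j)) μ)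
    (R2 : ℝ) (hR2 : 0 < R2) (hR : (R2 • H - M4).PosSemidef)
    (Sg : Matrix (Fin d) (Fin d) ℝ) (hSg : Sg.PosSemidef)
    (γ : ℝ) (hγ0 : 0 < γ) (hγ : γ < 1 / R2)
    (C SC : Matrix (Fin d) (Fin d) ℝ) (hC : C.PosSemidef)
    (hSC : ∀ i j, SC i j = ∫ ω, (x ω ⬝ᵥ C.mulVec (x ω)) * (x ω i * x ω j) ∂μ)
    (heq : H * C + C * H = γ • SC + γ • Sg)
    (hcrude : (((γ * ‖(CFC.sqrt H)⁻¹ * Sg * (CFC.sqrt H)⁻¹‖ /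
        (1 - γ * R2)) • (1 : Matrix (Fin d) (Fin d) ℝ)) - C).PosSemidef) :
    C.trace ≤ (γ / 2) * (H⁻¹ * Sg).trace +
      (1 / 2) * (γ ^ 2 * R2 / (1 - γ * R2)) * d *
        ‖(CFC.sqrt H)⁻¹ * Sg * (CFC.sqrt H)⁻¹‖ :=
  refined_stationary_covariance_trace_bound_general μ x H M4 hH hM4def hM4int R2 hR Sg γ hγ0 hγ C SC
    hSC heq hcrude
end
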